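/- Let Λ be a finite simple graph with vertices v_1, …, v_n and n ≥ 3, and let Γ(Λ) be the graph of the explicit construction. Then for every vertex v of Γ(Λ), the support graph of Γ(Λ) at v is a forest (contains no cycles). -/

import Mathlib

open SimpleGraph
open scoped commutatorElement

/-- The set of commutator relations defining the right-angled Artin group of a graph. -/
def raagRels {V : Type} (G : SimpleGraph V) : Set (FreeGroup V) :=
  {r | ∃ v w : V, G.Adj v w ∧ r = ⁅FreeGroup.of v, FreeGroup.of w⁆}

/-- The right-angled Artin group of a graph `G`. -/
abbrev RAAG {V : Type} (G : SimpleGraph V) : Type := PresentedGroup (raagRels G)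

/-- The subgroup of inner automorphisms of a group. -/
def Inn (G : Type*) [Group G] : Subgroup (MulAut G) := (MulAut.conj (G := G)).range

instance Inn.normal (G : Type*) [Group G] : (Inn G).Normal := by
  constructor
  intro x hx φ
  obtain ⟨g, rfl⟩ := hx
  refine ⟨φ g, ?_⟩
  ext h
  simp [MulAut.conj, mul_assoc]

/-- The outer automorphism group of a group. -/
abbrev Out (G : Type*) [Group G] : Type _ := MulAut G ⧸ Inn G

/-- The group of pure symmetric automorphisms of the right-angled Artin group of `G`:
those automorphisms sending each generator to a conjugate of itself. -/
def PSA {V : Type} (G : SimpleGraph V) : Subgroup (MulAut (RAAG G)) where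
  carrier := {φ | ∀ v : V,
    IsConj (PresentedGroup.of (rels := raagRels G) v) (φ (PresentedGroup.of v))}
  one_mem' := fun _ => IsConj.refl _
  mul_mem' := by
    intro φ ψ hφ hψ v
    rw [MulAut.mul_apply]
    exact (hφ v).trans (φ.toMonoidHom.map_isConj (hψ v))
  inv_mem' := by
    intro φ hφ v
    have h := (φ⁻¹ : MulAut (RAAG G)).toMonoidHom.map_isConj (hφ v)
    simp only [MulEquiv.coe_toMonoidHom] at h
    have h2 : (φ⁻¹ : MulAut (RAAG G)) (φ (PresentedGroup.of v)) = PresentedGroup.of v := by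
      simp
    rw [h2] at h
    exact h.symm

/-- The group of pure symmetric outer automorphisms: the image of `PSA` in `Out`. -/
def PSO {V : Type} (G : SimpleGraph V) : Subgroup (Out (RAAG G)) :=
  (PSA G).map (QuotientGroup.mk' (Inn (RAAG G)))

/-- The star of a vertex: the vertex together with its neighbours. -/
def graphStar {V : Type} (G : SimpleGraph V) (v : V) : Set V := insert v (G.neighborSet v)

/-- `IsCompOf G s A` says that `A` is the vertex set of a connected component of the
induced subgraph of `G` on `s`. -/
def IsCompOf {V : Type} (G : SimpleGraph V) (s : Set V) (A : Set V) : Prop :=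
  ∃ a : s, A = {x : V | ∃ hx : x ∈ s, (SimpleGraph.induce s G).Reachable ⟨x, hx⟩ a}

/-- The support graph of `G` at a vertex `v`: vertices are the connected components of
`G - st(v)`, and two distinct components `A`, `B` are adjacent if there is `b ∈ B` such
that `A` is also a connected component of `G - st(b)`, or symmetrically. -/
def SupportGraph {V : Type} (G : SimpleGraph V) (v : V) :
    SimpleGraph {A : Set V // IsCompOf G (graphStar G v)ᶜ A} :=
  SimpleGraph.fromRel (fun A B => ∃ b ∈ B.1, IsCompOf G (graphStar G b)ᶜ A.1)

/-- A pair of distinct non-adjacent vertices `(v, w)` is a separating intersection of links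
if `G - (lk(v) ∩ lk(w))` has a connected component containing neither `v` nor `w`. -/
def SILPair {V : Type} (G : SimpleGraph V) (v w : V) : Prop :=
  v ≠ w ∧ ¬ G.Adj v w ∧
    ∃ A : Set V, IsCompOf G (G.neighborSet v ∩ G.neighborSet w)ᶜ A ∧ v ∉ A ∧ w ∉ A
/-- Vertices of the graph `Γ(Λ)`: the vertices of `Λ` (indexed by `Fin n`, with `v i`
denoting `v_{i+1}`) together with new vertices `a₁, a₂, b₁, b₂, c₁, …, c_n, d₁, d₂`. -/
inductive GV (n : ℕ) : Type where
  | v (i : Fin n)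
  | a1 | a2 | b1 | b2
  | c (i : Fin n)
  | d1 | d2
deriving DecidableEq

/-- The edge relation of the graph `Γ(Λ)` (to be symmetrized by `SimpleGraph.fromRel`). -/
def gammaRel {n : ℕ} (Λ : SimpleGraph (Fin n)) : GV n → GV n → Prop
  | .v i, .v j => Λ.Adj i j
  | .c i, .v j => j = i ∨ (j : ℕ) = ((i : ℕ) + 1) % n
  | .c _, .d1 => True
  | .c _, .d2 => True
  | .d1, .v j => (j : ℕ) = 0
  | .d1, .b1 => True
  | .d2, .v j => (j : ℕ) ≠ 0
  | .d2, .b2 => True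
  | .v _, .b1 => True
  | .v _, .b2 => True
  | .b1, .a1 => True
  | .b2, .a2 => True
  | .a1, .a2 => True
  | _, _ => False

/-- The graph `Γ(Λ)` of the explicit construction. -/
def GammaGraph {n : ℕ} (Λ : SimpleGraph (Fin n)) : SimpleGraph (GV n) :=
  SimpleGraph.fromRel (gammaRel Λ)

/-- Vertices of the graph `Γ'(Λ)`: the vertices of `Λ` (indexed by `Fin n`, with `v i`
denoting `v_{i+1}`) together with new vertices
`a₁, a₂, a₃, b₁, b₂, b₃, c₁, …, c_n, d₁, d₂, d₃`. -/
inductive GV' (n : ℕ) : Type where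
  | v (i : Fin n)
  | a1 | a2 | a3 | b1 | b2 | b3
  | c (i : Fin n)
  | d1 | d2 | d3
deriving DecidableEq

/-- The edge relation of the graph `Γ'(Λ)` (to be symmetrized by `SimpleGraph.fromRel`). -/
def gammaRel' {n : ℕ} (Λ : SimpleGraph (Fin n)) : GV' n → GV' n → Prop
  | .v i, .v j => Λ.Adj i j
  | .c i, .v j => j = i ∨ (j : ℕ) = ((i : ℕ) + 1) % n
  | .c _, .d1 => True
  | .c _, .d2 => True
  | .c _, .d3 => True
  | .d1, .v j => (j : ℕ) = 0
  | .d1, .b1 => True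
  | .d2, .v j => (j : ℕ) = 1
  | .d3, .v j => 2 ≤ (j : ℕ)
  | .d3, .b3 => True
  | .d2, .d3 => True
  | .v _, .b1 => True
  | .v _, .b2 => True
  | .v _, .b3 => True
  | .b1, .a1 => True
  | .b2, .a2 => True
  | .b3, .a3 => True
  | .a1, .a2 => True
  | .a1, .a3 => True
  | .a2, .a3 => True
  | _, _ => False

/-- The graph `Γ'(Λ)` of the second explicit construction. -/
def GammaGraph' {n : ℕ} (Λ : SimpleGraph (Fin n)) : SimpleGraph (GV' n) :=
  SimpleGraph.fromRel (gammaRel' Λ)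

/-! Deleting the star of any vertex `v` from `Γ(Λ)` leaves at most two components: the
vertices among `a₁, a₂` (which are adjacent) and all the others, which are joined to a
single hub vertex (`d₁`, `d₂` or `b₁`, depending on `v`) by paths of length at most two.
The detours through `v_{i+2}` (for `v = c_i`) and `c_{j-1}` (for `v = v_i`) avoid the star
because `n ≥ 3`. The support graph therefore has at most two vertices, and a cycle needs
three. -/

namespace SimpleGraph

variable {V : Type} {G : SimpleGraph V}

theorem isAcyclic_of_forall_three_eq (h : ∀ a b c : V, a = b ∨ a = c ∨ b = c) :
    G.IsAcyclic := by
  intro u p hp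
  cases p with
  | nil => exact hp.ne_nil rfl
  | cons huv q =>
    cases q with
    | nil => exact G.loopless.irrefl u huv
    | @cons _ w _ hvw r =>
      have hedges := hp.isCircuit.isTrail.edges_nodup
      simp only [Walk.edges_cons, List.nodup_cons, List.mem_cons] at hedges
      rcases h u _ w with h | rfl | h
      · exact huv.ne h
      · exact hedges.1 (Or.inl Sym2.eq_swap)
      · exact hvw.ne h

@[simp] theorem mem_graphStar {v x : V} : x ∈ graphStar G v ↔ x = v ∨ G.Adj v x :=
  Iff.rfl

theorem reachable_induce_of_adj {s : Set V} {x y : V} (hx : x ∈ s) (hy : y ∈ s)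
    (h : G.Adj x y) : (G.induce s).Reachable ⟨x, hx⟩ ⟨y, hy⟩ :=
  Adj.reachable h

theorem reachable_induce_of_adj_of_adj {s : Set V} {x y z : V} (hx : x ∈ s) (hy : y ∈ s)
    (hz : z ∈ s) (hxy : G.Adj x y) (hyz : G.Adj y z) :
    (G.induce s).Reachable ⟨x, hx⟩ ⟨z, hz⟩ :=
  (reachable_induce_of_adj hx hy hxy).trans (reachable_induce_of_adj hy hz hyz)

theorem compSet_eq_of_reachable {s : Set V} {a b : s} (h : (G.induce s).Reachable a b) :
    {x | ∃ hx : x ∈ s, (G.induce s).Reachable ⟨x, hx⟩ a} =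
      {x | ∃ hx : x ∈ s, (G.induce s).Reachable ⟨x, hx⟩ b} := by
  ext x
  exact ⟨fun ⟨hx, r⟩ => ⟨hx, r.trans h⟩, fun ⟨hx, r⟩ => ⟨hx, r.trans h.symm⟩⟩

theorem supportGraph_isAcyclic_of_reachable {v : V} (f : V → Bool)
    (h : ∀ x y (hx : x ∈ (graphStar G v)ᶜ) (hy : y ∈ (graphStar G v)ᶜ), f x = f y →
      (G.induce (graphStar G v)ᶜ).Reachable ⟨x, hx⟩ ⟨y, hy⟩) :
    (SupportGraph G v).IsAcyclic := by
  apply isAcyclic_of_forall_three_eq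
  rintro ⟨_, a, rfl⟩ ⟨_, b, rfl⟩ ⟨_, c, rfl⟩
  have hpig : f a = f b ∨ f a = f c ∨ f b = f c := by
    cases f a <;> cases f b <;> cases f c <;> simp
  rcases hpig with hp | hp | hp
  · exact .inl (Subtype.ext <| compSet_eq_of_reachable (h _ _ a.2 b.2 hp))
  · exact .inr (.inl (Subtype.ext <| compSet_eq_of_reachable (h _ _ a.2 c.2 hp)))
  · exact .inr (.inr (Subtype.ext <| compSet_eq_of_reachable (h _ _ b.2 c.2 hp)))

end SimpleGraph

theorem Fin.val_eq_val_add_one_mod {n : ℕ} [NeZero n] {i j : Fin n} :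
    (j : ℕ) = ((i : ℕ) + 1) % n ↔ j = i + 1 := by
  simp [Fin.ext_iff, Fin.val_add]

theorem Fin.add_one_add_one_ne_self {n : ℕ} (hn : 3 ≤ n) [NeZero n] (i : Fin n) :
    i + 1 + 1 ≠ i := by
  rw [add_assoc, Ne, add_eq_left, Fin.ext_iff, Fin.val_add, Fin.val_one',
    Nat.mod_eq_of_lt (by omega : 1 < n), Nat.mod_eq_of_lt (by omega : 1 + 1 < n)]
  simp

namespace GammaGraph

open SimpleGraph

variable {n : ℕ} {Λ : SimpleGraph (Fin n)}

@[simp] theorem adj_iff {x y : GV n} :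
    (GammaGraph Λ).Adj x y ↔ x ≠ y ∧ (gammaRel Λ x y ∨ gammaRel Λ y x) :=
  fromRel_adj _ _ _

variable (Λ) in
def IsHub (v h : GV n) : Prop :=
  ∃ hh : h ∈ (graphStar (GammaGraph Λ) v)ᶜ,
    ∀ x (hx : x ∈ (graphStar (GammaGraph Λ) v)ᶜ), x ≠ .a1 → x ≠ .a2 → ((GammaGraph Λ).induce _).Reachable ⟨x, hx⟩ ⟨h, hh⟩

theorem IsHub.reachable {v h x y : GV n} (hub : IsHub Λ v h)
    (hx : x ∈ (graphStar (GammaGraph Λ) v)ᶜ) (hy : y ∈ (graphStar (GammaGraph Λ) v)ᶜ)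
    (hxa : x ≠ .a1 ∧ x ≠ .a2) (hya : y ≠ .a1 ∧ y ≠ .a2) :
    ((GammaGraph Λ).induce _).Reachable ⟨x, hx⟩ ⟨y, hy⟩ :=
  have ⟨_, hreach⟩ := hub
  (hreach x hx hxa.1 hxa.2).trans (hreach y hy hya.1 hya.2).symm

attribute [local simp] gammaRel Fin.val_eq_val_add_one_mod

theorem reachable_of_mem_a {v x y : GV n}
    (hx : x ∈ (graphStar (GammaGraph Λ) v)ᶜ) (hy : y ∈ (graphStar (GammaGraph Λ) v)ᶜ)
    (hxa : x = .a1 ∨ x = .a2) (hya : y = .a1 ∨ y = .a2) :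
    ((GammaGraph Λ).induce _).Reachable ⟨x, hx⟩ ⟨y, hy⟩ := by
  rcases hxa with rfl | rfl <;> rcases hya with rfl | rfl
  all_goals first | rfl | exact reachable_induce_of_adj hx hy (by simp)

theorem isHub_a1 [NeZero n] : IsHub Λ .a1 .d2 := by
  refine ⟨by simp, fun x hx h1 h2 => ?_⟩
  cases x
  case v j => exact reachable_induce_of_adj_of_adj hx (y := .b2) (by simp) _ (by simp) (by simp)
  case d1 => exact reachable_induce_of_adj_of_adj hx (y := .c 0) (by simp) _ (by simp) (by simp)
  case d2 => rfl
  all_goals first | (simp at hx h1 h2; done) | exact reachable_induce_of_adj hx _ (by simp)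

theorem isHub_a2 [NeZero n] : IsHub Λ .a2 .d1 := by
  refine ⟨by simp, fun x hx h1 h2 => ?_⟩
  cases x
  case v j => exact reachable_induce_of_adj_of_adj hx (y := .b1) (by simp) _ (by simp) (by simp)
  case d2 => exact reachable_induce_of_adj_of_adj hx (y := .c 0) (by simp) _ (by simp) (by simp)
  case d1 => rfl
  all_goals first | (simp at hx h1 h2; done) | exact reachable_induce_of_adj hx _ (by simp)

theorem isHub_b1 : IsHub Λ .b1 .d2 := by
  refine ⟨by simp, fun x hx h1 h2 => ?_⟩
  cases x
  case d2 => rfl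
  all_goals first | (simp at hx h1 h2; done) | exact reachable_induce_of_adj hx _ (by simp)

theorem isHub_b2 : IsHub Λ .b2 .d1 := by
  refine ⟨by simp, fun x hx h1 h2 => ?_⟩
  cases x
  case d1 => rfl
  all_goals first | (simp at hx h1 h2; done) | exact reachable_induce_of_adj hx _ (by simp)

theorem isHub_d1 : IsHub Λ .d1 .d2 := by
  refine ⟨by simp, fun x hx h1 h2 => ?_⟩
  cases x
  case d2 => rfl
  all_goals first | (simp at hx h1 h2; done) | exact reachable_induce_of_adj hx _ (by simp_all)

theorem isHub_d2 : IsHub Λ .d2 .b1 := by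
  refine ⟨by simp, fun x hx h1 h2 => ?_⟩
  cases x
  case b1 => rfl
  all_goals first | (simp at hx h1 h2; done) | exact reachable_induce_of_adj hx _ (by simp)

theorem isHub_c (hn : 3 ≤ n) [NeZero n] (i : Fin n) : IsHub Λ (.c i) .b1 := by
  have hv₂ : (GV.v (i + 1 + 1) : GV n) ∈ (graphStar (GammaGraph Λ) (.c i))ᶜ := by
    simp [Fin.add_one_add_one_ne_self hn i, show n ≠ 1 by omega]
  refine ⟨by simp, fun x hx h1 h2 => ?_⟩
  cases x
  case b2 => exact reachable_induce_of_adj_of_adj hx hv₂ _ (by simp) (by simp)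
  case c j =>
    by_cases hj : j = i + 1
    · subst hj
      exact reachable_induce_of_adj_of_adj hx hv₂ _ (by simp) (by simp)
    · exact reachable_induce_of_adj_of_adj hx (y := .v j) (by simp_all) _ (by simp) (by simp)
  case b1 => rfl
  all_goals first | (simp at hx h1 h2; done) | exact reachable_induce_of_adj hx _ (by simp)

theorem isHub_v_zero [NeZero n] : IsHub Λ (.v 0) .d2 := by
  refine ⟨by simp, fun x hx h1 h2 => ?_⟩
  cases x
  case d2 => rfl
  all_goals first | (simp at hx h1 h2; done) | exact reachable_induce_of_adj hx _ (by simp_all)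

theorem isHub_v_of_ne_zero (hn : 3 ≤ n) [NeZero n] {i : Fin n} (hi : i ≠ 0) :
    IsHub Λ (.v i) .d1 := by
  refine ⟨by simp [hi], fun x hx h1 h2 => ?_⟩
  cases x
  case v j =>
    by_cases hj : j + 1 = i
    · -- `c_j` is adjacent to `v_{j+1} = v_i`, so go through `c_{j-1}` instead.
      subst hj
      have := Fin.add_one_add_one_ne_self hn (j - 1)
      exact reachable_induce_of_adj_of_adj hx (y := .c (j - 1)) (by simp_all) _ (by simp) (by simp)
    · have hc : (GV.c j : GV n) ∈ (graphStar (GammaGraph Λ) (.v i))ᶜ := by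
        simp at hx ⊢
        exact ⟨Ne.symm hx.1, Ne.symm hj⟩
      exact reachable_induce_of_adj_of_adj hx hc _ (by simp) (by simp)
  case d1 => rfl
  all_goals first | (simp [hi] at hx h1 h2; done) | exact reachable_induce_of_adj hx _ (by simp)

theorem exists_isHub (hn : 3 ≤ n) (v : GV n) : ∃ h, IsHub Λ v h := by
  have : NeZero n := ⟨by omega⟩
  cases v with
  | v i =>
    by_cases hi : i = 0
    · exact ⟨_, hi ▸ isHub_v_zero⟩
    · exact ⟨_, isHub_v_of_ne_zero hn hi⟩
  | c i => exact ⟨_, isHub_c hn i⟩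
  | a1 => exact ⟨_, isHub_a1⟩
  | a2 => exact ⟨_, isHub_a2⟩
  | b1 => exact ⟨_, isHub_b1⟩
  | b2 => exact ⟨_, isHub_b2⟩
  | d1 => exact ⟨_, isHub_d1⟩
  | d2 => exact ⟨_, isHub_d2⟩

end GammaGraph

/-- For `Λ` with `n ≥ 3` vertices, every support graph of `Γ(Λ)` is a
forest. -/
theorem gammaGraph_support_graphs_forests
    (n : ℕ) (hn : 3 ≤ n) (Λ : SimpleGraph (Fin n)) :
    ∀ v : GV n, (SupportGraph (GammaGraph Λ) v).IsAcyclic := by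
  intro v
  obtain ⟨_, hub⟩ := GammaGraph.exists_isHub (Λ := Λ) hn v
  refine supportGraph_isAcyclic_of_reachable (fun x => decide (x = .a1 ∨ x = .a2)) ?_
  intro x y hx hy hxy
  have hya : (y = .a1 ∨ y = .a2) ↔ (x = .a1 ∨ x = .a2) := decide_eq_decide.mp hxy.symm
  by_cases hxa : x = .a1 ∨ x = .a2
  · exact GammaGraph.reachable_of_mem_a hx hy hxa (hya.mpr hxa)
  · exact hub.reachable hx hy (not_or.mp hxa) (not_or.mp (hxa ∘ hya.mp))
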